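/- Let K ≥ 0 and χ ∈ (0,2], and let Z be a real random variable on a probability space (Ω, ℙ) whose characteristic function is t ↦ exp(−K|t|^χ). Then for every ε > 0, ℙ(|Z| > ε) ≤ 2^{χ+1} K / ((χ+1) ε^χ). -/

import Mathlib

/-!
By the classical truncation inequality (Mathlib's `measureReal_abs_gt_le_integral_charFun`),
`P(|Z| > ε) ≤ (ε/2) |∫_{-2/ε}^{2/ε} (1 - φ_Z(t)) dt|`. For `φ_Z(t) = exp(-K|t|^χ)` the integrand
is at most `K|t|^χ` since `1 - e^{-x} ≤ x`, and integrating `|t|^χ` over `[-2/ε, 2/ε]` gives the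
bound.
-/

open MeasureTheory ProbabilityTheory Filter Topology

/-- The characteristic function of a real random variable `Z` on `(Ω, P)`:
`φ_Z(t) = E[exp(i t Z)]`. -/
noncomputable def charFn {Ω : Type*} [MeasurableSpace Ω] (P : Measure Ω) (Z : Ω → ℝ) (t : ℝ) : ℂ :=
  ∫ ω, Complex.exp (t * Z ω * Complex.I) ∂P

lemma charFn_eq_charFun_map {Ω : Type*} [MeasurableSpace Ω] {P : Measure Ω} {Z : Ω → ℝ}
    (hZ : AEMeasurable Z P) (t : ℝ) : charFn P Z t = charFun (P.map Z) t := by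
  rw [charFun_apply_real, integral_map hZ (by fun_prop)]
  simp only [charFn, mul_comm]

lemma norm_one_sub_exp_neg_le {x : ℝ} (hx : 0 ≤ x) : ‖(1 : ℂ) - (Real.exp (-x) : ℂ)‖ ≤ x := by
  rw [← Complex.ofReal_one, ← Complex.ofReal_sub, Complex.norm_real, Real.norm_eq_abs,
    abs_of_nonneg (by simpa using Real.exp_le_one_iff.mpr (neg_nonpos.mpr hx))]
  linarith [Real.add_one_le_exp (-x)]

lemma integral_abs_rpow_symm {a χ : ℝ} (ha : 0 ≤ a) (hχ : 0 ≤ χ) :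
    ∫ t in -a..a, |t| ^ χ = 2 * a ^ (χ + 1) / (χ + 1) := by
  have hint : ∀ b c : ℝ, IntervalIntegrable (fun t : ℝ => |t| ^ χ) volume b c := fun b c =>
    (continuous_abs.rpow_const fun _ => Or.inr hχ).intervalIntegrable b c
  have hhalf : ∫ t in (0 : ℝ)..a, |t| ^ χ = a ^ (χ + 1) / (χ + 1) := by
    rw [intervalIntegral.integral_congr (g := fun t => t ^ χ), integral_rpow (Or.inl (by linarith)),
      Real.zero_rpow (by linarith)]
    · ring
    · intro t ht
      rw [Set.uIcc_of_le ha] at ht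
      simp only [abs_of_nonneg ht.1]
  rw [← intervalIntegral.integral_add_adjacent_intervals (hint _ 0) (hint 0 _)]
  have hneg : ∫ t in -a..0, |t| ^ χ = ∫ t in (0 : ℝ)..a, |t| ^ χ := by
    simpa using (intervalIntegral.integral_comp_neg (a := 0) (b := a) (fun t : ℝ => |t| ^ χ)).symm
  rw [hneg, hhalf]
  ring

lemma norm_integral_one_sub_exp_neg_abs_rpow_le {K χ a : ℝ} (hK : 0 ≤ K) (hχ : 0 ≤ χ) (ha : 0 ≤ a) :
    ‖∫ t in -a..a, (1 - (Real.exp (-(K * |t| ^ χ)) : ℂ))‖ ≤ 2 * K * a ^ (χ + 1) / (χ + 1) := by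
  calc ‖∫ t in -a..a, (1 - (Real.exp (-(K * |t| ^ χ)) : ℂ))‖
      ≤ ∫ t in -a..a, K * |t| ^ χ := by
        refine intervalIntegral.norm_integral_le_of_norm_le (by linarith) (ae_of_all _ fun t _ => ?_)
          ((continuous_abs.rpow_const fun _ => Or.inr hχ).const_mul K |>.intervalIntegrable _ _)
        exact norm_one_sub_exp_neg_le (by positivity)
    _ = 2 * K * a ^ (χ + 1) / (χ + 1) := by
        rw [intervalIntegral.integral_const_mul, integral_abs_rpow_symm ha hχ]
        ring

lemma measureReal_abs_gt_le_of_charFun_eq_exp_neg_abs_rpow {μ : Measure ℝ} [IsProbabilityMeasure μ]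
    {K χ : ℝ} (hK : 0 ≤ K) (hχ : 0 ≤ χ) (hμ : ∀ t, charFun μ t = (Real.exp (-(K * |t| ^ χ)) : ℂ))
    {ε : ℝ} (hε : 0 < ε) :
    μ.real {x | ε < |x|} ≤ 2 ^ (χ + 1) * K / ((χ + 1) * ε ^ χ) := by
  have h := measureReal_abs_gt_le_integral_charFun (μ := μ) hε
  simp_rw [hμ, neg_mul] at h
  refine h.trans ?_
  calc 2⁻¹ * ε * ‖∫ t in -(2 * ε⁻¹)..2 * ε⁻¹, (1 - (Real.exp (-(K * |t| ^ χ)) : ℂ))‖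
      ≤ 2⁻¹ * ε * (2 * K * (2 * ε⁻¹) ^ (χ + 1) / (χ + 1)) := by
        gcongr
        exact norm_integral_one_sub_exp_neg_abs_rpow_le hK hχ (by positivity)
    _ = 2 ^ (χ + 1) * K / ((χ + 1) * ε ^ χ) := by
        rw [Real.mul_rpow (by norm_num) (by positivity), Real.inv_rpow hε.le,
          Real.rpow_add_one hε.ne', Real.rpow_add_one (by norm_num : (2 : ℝ) ≠ 0)]
        field_simp

/-- Tail estimate for symmetric `χ`-stable random variables (core inequality of the paper's
Lemma 3.1): if `Z` has characteristic function `exp(-K|t|^χ)`, then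
`P(|Z| > ε) ≤ 2^{χ+1} K / ((χ+1) ε^χ)`. -/
theorem statement5
    {Ω : Type*} [MeasurableSpace Ω] (P : Measure Ω) [IsProbabilityMeasure P]
    (K χ : ℝ) (hK : 0 ≤ K) (hχ : χ ∈ Set.Ioc (0 : ℝ) 2)
    (Z : Ω → ℝ) (hZ : Measurable Z)
    (hchar : ∀ t, charFn P Z t = (Real.exp (-(K * |t| ^ χ)) : ℂ)) :
    ∀ ε > (0 : ℝ), P {ω | ε < |Z ω|}
      ≤ ENNReal.ofReal (2 ^ (χ + 1) * K / ((χ + 1) * ε ^ χ)) := by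
  intro ε hε
  have := Measure.isProbabilityMeasure_map (μ := P) hZ.aemeasurable
  have hlaw : ∀ t, charFun (P.map Z) t = (Real.exp (-(K * |t| ^ χ)) : ℂ) := fun t => by
    rw [← charFn_eq_charFun_map hZ.aemeasurable, hchar]
  have hbound := measureReal_abs_gt_le_of_charFun_eq_exp_neg_abs_rpow hK hχ.1.le hlaw hε
  rw [map_measureReal_apply hZ (measurableSet_lt measurable_const continuous_abs.measurable)]
    at hbound
  rw [← ofReal_measureReal]
  exact ENNReal.ofReal_le_ofReal hbound
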